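/- arXiv:1906.03120 — 6 statements merged into one kernel-verified Lean document; each statement's English description precedes it below -/
import Mathlib

section
/- Let V be a real vector space of dimension 2n and let U1, U3 be transverse n-dimensional subspaces of V. Let f, g : U1 → U3 be linear maps with f bijective, and set U2 = Graph(f) = {u + f(u) : u ∈ U1} and U4 = Graph(g) = {u + g(u) : u ∈ U1}. Then U1 is transverse to U2, U3 is transverse to U4, and the cross-ratio [U1, U2; U3, U4] equals f⁻¹ ∘ g as an endomorphism of U1. -/
open Module Submodule

variable {V : Type*} [AddCommGroup V] [Module ℝ V]

/-- The projection onto `U` with kernel `W`, as an endomorphism of `V`. -/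
noncomputable def projTo (U W : Submodule ℝ V) (h : IsCompl U W) : V →ₗ[ℝ] V :=
  U.subtype ∘ₗ U.linearProjOfIsCompl W h

/-- The reflection in the pair `(U, W)`: `π_U^W - π_W^U`. -/
noncomputable def reflPair (U W : Submodule ℝ V) (h : IsCompl U W) : V →ₗ[ℝ] V :=
  projTo U W h - projTo W U h.symm

/-- The generalized cross-ratio `[U1,U2;U3,U4]`: the restriction of
`π_{U1}^{U2} ∘ π_{U3}^{U4}` to `U1`, as an endomorphism of `U1`. -/
noncomputable def crossRatio (U1 U2 U3 U4 : Submodule ℝ V)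
    (h12 : IsCompl U1 U2) (h34 : IsCompl U3 U4) : U1 →ₗ[ℝ] U1 :=
  (U1.linearProjOfIsCompl U2 h12) ∘ₗ (projTo U3 U4 h34) ∘ₗ U1.subtype


lemma proj_add (U W : Submodule ℝ V) (h : IsCompl U W) (a b : V) (ha : a ∈ U) (hb : b ∈ W) :
    U.linearProjOfIsCompl W h (a + b) = ⟨a, ha⟩ := by
  have h1 : U.linearProjOfIsCompl W h a = ⟨a, ha⟩ :=
    Submodule.linearProjOfIsCompl_apply_left h ⟨a, ha⟩
  have h2 : U.linearProjOfIsCompl W h b = 0 :=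
    Submodule.linearProjOfIsCompl_apply_right h ⟨b, hb⟩
  rw [map_add, h1, h2, add_zero]

lemma graph_compl (U1 U3 : Submodule ℝ V) (h13 : IsCompl U1 U3)
    (g : U1 →ₗ[ℝ] U3) :
    IsCompl U3 (LinearMap.range (U1.subtype + U3.subtype ∘ₗ g)) := by
  constructor
  · rw [disjoint_def]
    rintro x hx3 ⟨u, rfl⟩
    simp only [LinearMap.add_apply, LinearMap.coe_comp, Function.comp_apply,
      Submodule.coe_subtype] at hx3 ⊢
    have hu : (u : V) ∈ U1 ⊓ U3 := by
      constructor
      · exact u.2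
      · have : (u : V) = ((u : V) + (g u : V)) - (g u : V) := by abel
        rw [this]; exact U3.sub_mem hx3 (g u).2
    have : (u : V) = 0 := by
      rw [h13.inf_eq_bot] at hu; simpa using hu
    have hu0 : u = 0 := Subtype.ext this
    simp [hu0]
  · rw [codisjoint_iff, eq_top_iff]
    intro v _
    obtain ⟨a, ha, b, hb, rfl⟩ := Submodule.mem_sup.mp
      (by rw [h13.sup_eq_top]; trivial : v ∈ U1 ⊔ U3)
    refine Submodule.mem_sup.mpr ⟨b - (g ⟨a, ha⟩ : V), U3.sub_mem hb (g ⟨a, ha⟩).2,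
      _, ⟨⟨a, ha⟩, rfl⟩, ?_⟩
    simp only [LinearMap.add_apply, LinearMap.coe_comp, Function.comp_apply,
      Submodule.coe_subtype]
    abel

lemma graph_compl' (U1 U3 : Submodule ℝ V) (h13 : IsCompl U1 U3)
    (f : U1 →ₗ[ℝ] U3) (hf : Function.Bijective f) :
    IsCompl U1 (LinearMap.range (U1.subtype + U3.subtype ∘ₗ f)) := by
  constructor
  · rw [disjoint_def]
    rintro x hx1 ⟨u, rfl⟩
    simp only [LinearMap.add_apply, LinearMap.coe_comp, Function.comp_apply,
      Submodule.coe_subtype] at hx1 ⊢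
    have hfu : (f u : V) ∈ U1 ⊓ U3 := by
      constructor
      · have : (f u : V) = ((u : V) + (f u : V)) - (u : V) := by abel
        rw [this]; exact U1.sub_mem hx1 u.2
      · exact (f u).2
    have hfu0 : f u = 0 := Subtype.ext (by rw [h13.inf_eq_bot] at hfu; simpa using hfu)
    have hu0 : u = 0 := hf.1 (by rw [hfu0, map_zero])
    simp [hu0]
  · rw [codisjoint_iff, eq_top_iff]
    intro v _
    obtain ⟨a, ha, b, hb, rfl⟩ := Submodule.mem_sup.mp
      (by rw [h13.sup_eq_top]; trivial : v ∈ U1 ⊔ U3)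
    obtain ⟨w, hw⟩ := hf.2 ⟨b, hb⟩
    refine Submodule.mem_sup.mpr ⟨a - (w : V), U1.sub_mem ha w.2,
      _, ⟨w, rfl⟩, ?_⟩
    simp only [LinearMap.add_apply, LinearMap.coe_comp, Function.comp_apply,
      Submodule.coe_subtype, hw]
    abel

theorem stmt3 {V : Type*} [AddCommGroup V] [Module ℝ V] [FiniteDimensional ℝ V]
    (n : ℕ) (hV : finrank ℝ V = 2 * n)
    (U1 U3 : Submodule ℝ V) (h13 : IsCompl U1 U3)
    (hU1 : finrank ℝ U1 = n) (hU3 : finrank ℝ U3 = n)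
    (f g : U1 →ₗ[ℝ] U3) (hf : Function.Bijective f) :
    ∃ (h12 : IsCompl U1 (LinearMap.range (U1.subtype + U3.subtype ∘ₗ f)))
      (h34 : IsCompl U3 (LinearMap.range (U1.subtype + U3.subtype ∘ₗ g))),
      crossRatio U1 (LinearMap.range (U1.subtype + U3.subtype ∘ₗ f)) U3
          (LinearMap.range (U1.subtype + U3.subtype ∘ₗ g)) h12 h34
        = (LinearEquiv.ofBijective f hf).symm.toLinearMap ∘ₗ g := by
  refine ⟨graph_compl' U1 U3 h13 f hf, graph_compl U1 U3 h13 g, ?_⟩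
  set h12 := graph_compl' U1 U3 h13 f hf
  set h34 := graph_compl U1 U3 h13 g
  ext x
  set u : U1 := (LinearEquiv.ofBijective f hf).symm (g x) with hu
  have hfu : f u = g x := (LinearEquiv.ofBijective f hf).apply_symm_apply (g x)
  have step1 : U3.linearProjOfIsCompl _ h34 (x : V) = ⟨-(g x : V), U3.neg_mem (g x).2⟩ := by
    have hd : (x : V) = -(g x : V) + ((x : V) + (g x : V)) := by abel
    rw [hd]
    exact proj_add U3 _ h34 _ _ (U3.neg_mem (g x).2)
      ⟨x, by simp [LinearMap.add_apply]⟩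
  have step2 : U1.linearProjOfIsCompl _ h12 (-(g x : V)) = u := by
    have hd : -(g x : V) = (u : V) + (-((u : V) + (f u : V))) := by
      rw [hfu]; abel
    rw [hd]
    exact proj_add U1 _ h12 _ _ u.2
      ((LinearMap.range _).neg_mem ⟨u, by simp [LinearMap.add_apply]⟩)
  simp only [crossRatio, projTo, LinearMap.coe_comp, Function.comp_apply,
    Submodule.coe_subtype, LinearEquiv.coe_coe, step1]
  rw [step2]
end

section
/- Let U1, U2, U3, U4 be pairwise transverse n-dimensional subspaces of a real vector space V of dimension 2n. Then: (i) for every g ∈ GL(V), the cross-ratio [gU1, gU2; gU3, gU4] equals (g|_{U1}) ∘ [U1,U2;U3,U4] ∘ (g|_{U1})⁻¹, where g|_{U1} : U1 → gU1 is the isomorphism induced by g; (ii) [U1,U2;U4,U3] = id_{U1} − [U1,U2;U3,U4]; (iii) [U1,U2;U3,U4] is an invertible endomorphism of U1 and [U1,U4;U3,U2] = [U1,U2;U3,U4]⁻¹; (iv) there is a linear isomorphism h : U1 → U3 such that [U3,U2;U1,U4] = h ∘ [U1,U2;U3,U4]⁻¹ ∘ h⁻¹. -/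
/-!
Everything rests on the characterization `π_U^W x = y ↔ y ∈ U ∧ x - y ∈ W`. For `x ∈ U1` put
`y = π_{U3}^{U4} x` and `c = [U1,U2;U3,U4] x`, so that `x - y ∈ U4` and `y - c ∈ U2`. Read
backwards, these say `π_{U3}^{U2} c = y` and `π_{U1}^{U4} y = x`, i.e. `[U1,U4;U3,U2]` inverts
`[U1,U2;U3,U4]`. Equivariance is the same characterization transported by `g`, (ii) is
`π_{U4}^{U3} = id - π_{U3}^{U4}`, and in (iv) the isomorphism `h = π_{U3}^{U2}|_{U1}`, i.e.
`U1 ≅ V ⧸ U2 ≅ U3`, intertwines `[U1,U4;U3,U2]` and `[U3,U2;U1,U4]` on the nose.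
-/

open Module Submodule

variable {V : Type*} [AddCommGroup V] [Module ℝ V]

namespace Submodule

variable {R E F : Type*} [Ring R] [AddCommGroup E] [Module R E] [AddCommGroup F] [Module R F]
  {p q : Submodule R E}

theorem projectionOnto_eq_of_sub_mem (h : IsCompl p q) {x : E} {y : p} (hxy : x - y ∈ q) :
    p.projectionOnto q h x = y := by
  rw [← sub_add_cancel x y, map_add, projectionOnto_apply_of_mem_right h hxy, zero_add,
    projectionOnto_apply_left]

theorem projectionOnto_map (e : E ≃ₗ[R] F) (h : IsCompl p q)
    (h' : IsCompl (p.map (e : E →ₗ[R] F)) (q.map (e : E →ₗ[R] F))) (x : E) :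
    (p.map (e : E →ₗ[R] F)).projectionOnto (q.map (e : E →ₗ[R] F)) h' (e x)
      = e.submoduleMap p (p.projectionOnto q h x) :=
  projectionOnto_eq_of_sub_mem h' <| by
    rw [LinearEquiv.submoduleMap_apply, coe_projectionOnto_apply, ← map_sub]
    exact mem_map_of_mem (sub_projection_mem h x)

theorem projection_map (e : E ≃ₗ[R] F) (h : IsCompl p q)
    (h' : IsCompl (p.map (e : E →ₗ[R] F)) (q.map (e : E →ₗ[R] F))) (x : E) :
    (p.map (e : E →ₗ[R] F)).projection (q.map (e : E →ₗ[R] F)) h' (e x)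
      = e (p.projection q h x) :=
  congrArg Subtype.val (projectionOnto_map e h h' x)

noncomputable def equivOfIsCompl {p₁ p₂ : Submodule R E} (h₁ : IsCompl p₁ q)
    (h₂ : IsCompl p₂ q) : p₁ ≃ₗ[R] p₂ :=
  (q.quotientEquivOfIsCompl p₁ h₁.symm).symm ≪≫ₗ q.quotientEquivOfIsCompl p₂ h₂.symm

end Submodule

open Submodule

variable {U1 U2 U3 U4 : Submodule ℝ V}

theorem crossRatio_eq_comp (h12 : IsCompl U1 U2) (h34 : IsCompl U3 U4) :
    crossRatio U1 U2 U3 U4 h12 h34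
      = U1.projectionOnto U2 h12 ∘ₗ U3.projection U4 h34 ∘ₗ U1.subtype :=
  rfl

theorem crossRatio_map {V' : Type*} [AddCommGroup V'] [Module ℝ V'] (e : V ≃ₗ[ℝ] V')
    (h12 : IsCompl U1 U2) (h34 : IsCompl U3 U4)
    (h12' : IsCompl (U1.map (e : V →ₗ[ℝ] V')) (U2.map (e : V →ₗ[ℝ] V')))
    (h34' : IsCompl (U3.map (e : V →ₗ[ℝ] V')) (U4.map (e : V →ₗ[ℝ] V'))) :
    crossRatio (U1.map (e : V →ₗ[ℝ] V')) (U2.map (e : V →ₗ[ℝ] V'))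
        (U3.map (e : V →ₗ[ℝ] V')) (U4.map (e : V →ₗ[ℝ] V')) h12' h34'
      = (e.submoduleMap U1).toLinearMap ∘ₗ crossRatio U1 U2 U3 U4 h12 h34 ∘ₗ
          (e.submoduleMap U1).symm.toLinearMap := by
  rw [← LinearMap.comp_assoc, LinearEquiv.eq_comp_toLinearMap_symm]
  ext x
  simp only [crossRatio_eq_comp, LinearMap.comp_apply, LinearEquiv.coe_coe, subtype_apply,
    LinearEquiv.submoduleMap_apply, projection_map e h34 h34', projectionOnto_map e h12 h12']

theorem crossRatio_swap_right (h12 : IsCompl U1 U2) (h34 : IsCompl U3 U4) :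
    crossRatio U1 U2 U4 U3 h12 h34.symm = LinearMap.id - crossRatio U1 U2 U3 U4 h12 h34 := by
  rw [crossRatio_eq_comp, crossRatio_eq_comp, projection_eq_id_sub_projection h34,
    LinearMap.sub_comp, LinearMap.comp_sub, LinearMap.id_comp, projectionOnto_comp_subtype]

theorem crossRatio_comp_crossRatio (h12 : IsCompl U1 U2) (h34 : IsCompl U3 U4)
    (h14 : IsCompl U1 U4) (h32 : IsCompl U3 U2) :
    crossRatio U1 U4 U3 U2 h14 h32 ∘ₗ crossRatio U1 U2 U3 U4 h12 h34 = LinearMap.id := by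
  ext x
  set y := U3.projectionOnto U4 h34 x
  have hy : U3.projectionOnto U2 h32 (crossRatio U1 U2 U3 U4 h12 h34 x) = y :=
    projectionOnto_eq_of_sub_mem h32 (sub_mem_comm_iff.mp (sub_projection_mem h12 y))
  have hx : U1.projectionOnto U4 h14 y = x :=
    projectionOnto_eq_of_sub_mem h14 (sub_mem_comm_iff.mp (sub_projection_mem h34 x))
  change (U1.projectionOnto U4 h14
    (U3.projectionOnto U2 h32 (crossRatio U1 U2 U3 U4 h12 h34 x)) : V) = x
  rw [hy, hx]

theorem crossRatio_rotate (h12 : IsCompl U1 U2) (h14 : IsCompl U1 U4) (h32 : IsCompl U3 U2) :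
    crossRatio U3 U2 U1 U4 h32 h14
      = (equivOfIsCompl h12 h32).toLinearMap ∘ₗ crossRatio U1 U4 U3 U2 h14 h32 ∘ₗ
          (equivOfIsCompl h12 h32).symm.toLinearMap := by
  -- `equivOfIsCompl h12 h32` is `π_{U3}^{U2}` restricted to `U1`, so after moving it to the left
  -- both sides are `π_{U3}^{U2} ∘ π_{U1}^{U4} ∘ π_{U3}^{U2}` on `U1`.
  rw [← LinearMap.comp_assoc, LinearEquiv.eq_comp_toLinearMap_symm]
  rfl

theorem stmt4_general {V : Type*} [AddCommGroup V] [Module ℝ V]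
    (U1 U2 U3 U4 : Submodule ℝ V)
    (h12 : IsCompl U1 U2) (h14 : IsCompl U1 U4)
    (h23 : IsCompl U2 U3) (h34 : IsCompl U3 U4) :
    -- (i) equivariance under `GL(V)`
    (∀ (e : V ≃ₗ[ℝ] V)
        (h12' : IsCompl (U1.map (e : V →ₗ[ℝ] V)) (U2.map (e : V →ₗ[ℝ] V)))
        (h34' : IsCompl (U3.map (e : V →ₗ[ℝ] V)) (U4.map (e : V →ₗ[ℝ] V))),
        crossRatio (U1.map (e : V →ₗ[ℝ] V)) (U2.map (e : V →ₗ[ℝ] V))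
            (U3.map (e : V →ₗ[ℝ] V)) (U4.map (e : V →ₗ[ℝ] V)) h12' h34'
          = (e.submoduleMap U1).toLinearMap ∘ₗ crossRatio U1 U2 U3 U4 h12 h34 ∘ₗ
              (e.submoduleMap U1).symm.toLinearMap) ∧
    -- (ii) `[U1,U2;U4,U3] = id - [U1,U2;U3,U4]`
    (crossRatio U1 U2 U4 U3 h12 h34.symm
      = LinearMap.id - crossRatio U1 U2 U3 U4 h12 h34) ∧
    -- (iii) `[U1,U2;U3,U4]` is invertible and `[U1,U4;U3,U2]` is its inverse,
    -- and (iv) `[U3,U2;U1,U4]` is conjugate to `[U1,U2;U3,U4]⁻¹`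
    (∃ hbij : Function.Bijective (crossRatio U1 U2 U3 U4 h12 h34),
      crossRatio U1 U4 U3 U2 h14 h23.symm
        = (LinearEquiv.ofBijective (crossRatio U1 U2 U3 U4 h12 h34) hbij).symm.toLinearMap ∧
      ∃ h : U1 ≃ₗ[ℝ] U3,
        crossRatio U3 U2 U1 U4 h23.symm h14
          = h.toLinearMap ∘ₗ
              (LinearEquiv.ofBijective (crossRatio U1 U2 U3 U4 h12 h34) hbij).symm.toLinearMap ∘ₗ
                h.symm.toLinearMap) := by
  let A : U1 ≃ₗ[ℝ] U1 := .ofLinearMap (f := crossRatio U1 U2 U3 U4 h12 h34)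
    (g := crossRatio U1 U4 U3 U2 h14 h23.symm) (crossRatio_comp_crossRatio h14 h23.symm h12 h34)
    (crossRatio_comp_crossRatio h12 h34 h14 h23.symm)
  have hA : LinearEquiv.ofBijective (crossRatio U1 U2 U3 U4 h12 h34) A.bijective = A :=
    LinearEquiv.ext fun _ => rfl
  refine ⟨fun e => crossRatio_map e h12 h34, crossRatio_swap_right h12 h34, A.bijective, ?_⟩
  rw [hA]
  exact ⟨rfl, equivOfIsCompl h12 h23.symm, crossRatio_rotate h12 h14 h23.symm⟩

theorem stmt4 {V : Type*} [AddCommGroup V] [Module ℝ V] [FiniteDimensional ℝ V]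
    (n : ℕ) (hV : finrank ℝ V = 2 * n)
    (U1 U2 U3 U4 : Submodule ℝ V)
    (hd1 : finrank ℝ U1 = n) (hd2 : finrank ℝ U2 = n)
    (hd3 : finrank ℝ U3 = n) (hd4 : finrank ℝ U4 = n)
    (h12 : IsCompl U1 U2) (h13 : IsCompl U1 U3) (h14 : IsCompl U1 U4)
    (h23 : IsCompl U2 U3) (h24 : IsCompl U2 U4) (h34 : IsCompl U3 U4) :
    -- (i) equivariance under `GL(V)`
    (∀ (e : V ≃ₗ[ℝ] V)
        (h12' : IsCompl (U1.map (e : V →ₗ[ℝ] V)) (U2.map (e : V →ₗ[ℝ] V)))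
        (h34' : IsCompl (U3.map (e : V →ₗ[ℝ] V)) (U4.map (e : V →ₗ[ℝ] V))),
        crossRatio (U1.map (e : V →ₗ[ℝ] V)) (U2.map (e : V →ₗ[ℝ] V))
            (U3.map (e : V →ₗ[ℝ] V)) (U4.map (e : V →ₗ[ℝ] V)) h12' h34'
          = (e.submoduleMap U1).toLinearMap ∘ₗ crossRatio U1 U2 U3 U4 h12 h34 ∘ₗ
              (e.submoduleMap U1).symm.toLinearMap) ∧
    -- (ii) `[U1,U2;U4,U3] = id - [U1,U2;U3,U4]`
    (crossRatio U1 U2 U4 U3 h12 h34.symm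
      = LinearMap.id - crossRatio U1 U2 U3 U4 h12 h34) ∧
    -- (iii) `[U1,U2;U3,U4]` is invertible and `[U1,U4;U3,U2]` is its inverse,
    -- and (iv) `[U3,U2;U1,U4]` is conjugate to `[U1,U2;U3,U4]⁻¹`
    (∃ hbij : Function.Bijective (crossRatio U1 U2 U3 U4 h12 h34),
      crossRatio U1 U4 U3 U2 h14 h23.symm
        = (LinearEquiv.ofBijective (crossRatio U1 U2 U3 U4 h12 h34) hbij).symm.toLinearMap ∧
      ∃ h : U1 ≃ₗ[ℝ] U3,
        crossRatio U3 U2 U1 U4 h23.symm h14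
          = h.toLinearMap ∘ₗ
              (LinearEquiv.ofBijective (crossRatio U1 U2 U3 U4 h12 h34) hbij).symm.toLinearMap ∘ₗ
                h.symm.toLinearMap) :=
  stmt4_general U1 U2 U3 U4 h12 h14 h23 h34
end

section
/- Let U1, U2, U3, U4 be pairwise transverse n-dimensional subspaces of a real vector space V of dimension 2n. Let T = Refl(U1,U2) ∘ Refl(U3,U4) ∈ GL(V) and let C = [U1,U2;U3,U4] ∈ End(U1). Then for every real number λ ≠ 0, det(λ·id_V − T) = (4λ)^n · det(((λ+1)²/(4λ))·id_{U1} − C). -/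
open Module Submodule

variable {V : Type*} [AddCommGroup V] [Module ℝ V]

/-!
Write `P` and `Q` for the projections onto `U1` along `U2` and onto `U3` along `U4`, so that the
two reflections are `2P - 1` and `2Q - 1`. Since `(2Q - 1)² = 1`, we get
`λ - T = (A - 2P) ∘ (2Q - 1)` with `A = (λ + 1) Q + (1 - λ) (1 - Q)`, which for `λ ≠ ±1` is
invertible with determinant `(λ + 1)ⁿ (1 - λ)ⁿ`. As `P` factors through `U1`, the
Weinstein–Aronszajn identity turns `det (A - 2P)` into a determinant on `U1`, and compressing
`A⁻¹` to `U1` gives an affine expression in the cross-ratio `C`. The outcome is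
`det (λ - T) = det ((λ + 1)² - 4λ C)`; both sides are continuous in `λ`, so this also holds at
`λ = ±1`, and pulling out the factor `4λ` gives the theorem.
-/

section Projections

variable (U W : Submodule ℝ V) (h : IsCompl U W)

lemma projTo_eq_projection : projTo U W h = U.projection W h := rfl

lemma projTo_add_projTo : projTo U W h + projTo W U h.symm = LinearMap.id :=
  projection_add_projection_eq_id h

lemma projTo_comp_projTo : projTo U W h ∘ₗ projTo U W h = projTo U W h :=
  (isIdempotentElem_projection h).eq

lemma projTo_comp_projTo_symm : projTo U W h ∘ₗ projTo W U h.symm = 0 := by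
  ext v
  simp [projTo_eq_projection, projection_apply_eq_zero_iff, projection_apply_mem]

lemma smul_projTo_add_smul_projTo_comp (a b c d : ℝ) :
    (a • projTo U W h + b • projTo W U h.symm) ∘ₗ (c • projTo U W h + d • projTo W U h.symm)
      = (a * c) • projTo U W h + (b * d) • projTo W U h.symm := by
  simp only [LinearMap.add_comp, LinearMap.comp_add, LinearMap.smul_comp, LinearMap.comp_smul,
    projTo_comp_projTo, projTo_comp_projTo_symm, projTo_comp_projTo_symm W U h.symm, smul_zero]
  module

lemma det_smul_projTo_add_smul_projTo [FiniteDimensional ℝ V] (a b : ℝ) :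
    LinearMap.det (a • projTo U W h + b • projTo W U h.symm)
      = a ^ finrank ℝ U * b ^ finrank ℝ W := by
  let e := prodEquivOfIsCompl U W h
  have hconj : a • projTo U W h + b • projTo W U h.symm
      = (e : U × W →ₗ[ℝ] V) ∘ₗ LinearMap.prodMap (a • LinearMap.id) (b • LinearMap.id)
          ∘ₗ (e.symm : V →ₗ[ℝ] U × W) := by
    ext v
    simp [e, projTo_eq_projection]
  rw [hconj, LinearMap.det_conj, LinearMap.det_prodMap, LinearMap.det_smul, LinearMap.det_smul,
    LinearMap.det_id, LinearMap.det_id, mul_one, mul_one]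

lemma reflPair_eq_smul_projTo_add_smul_projTo :
    reflPair U W h = (1 : ℝ) • projTo U W h + (-1 : ℝ) • projTo W U h.symm := by
  rw [reflPair]; module

lemma reflPair_comp_reflPair : reflPair U W h ∘ₗ reflPair U W h = LinearMap.id := by
  rw [reflPair_eq_smul_projTo_add_smul_projTo, smul_projTo_add_smul_projTo_comp,
    ← projTo_add_projTo U W h]
  norm_num

lemma det_reflPair [FiniteDimensional ℝ V] :
    LinearMap.det (reflPair U W h) = (-1) ^ finrank ℝ W := by
  rw [reflPair_eq_smul_projTo_add_smul_projTo, det_smul_projTo_add_smul_projTo, one_pow, one_mul]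

end Projections

section Determinants

variable {K M N : Type*} [Field K] [AddCommGroup M] [Module K M] [FiniteDimensional K M]
  [AddCommGroup N] [Module K N] [FiniteDimensional K N]

lemma LinearMap.det_id_add_comp_comm (f : N →ₗ[K] M) (g : M →ₗ[K] N) :
    LinearMap.det (LinearMap.id + f ∘ₗ g) = LinearMap.det (LinearMap.id + g ∘ₗ f) := by
  classical
  let b := finBasis K M
  let c := finBasis K N
  rw [← LinearMap.det_toMatrix b, ← LinearMap.det_toMatrix c, map_add, map_add,
    LinearMap.toMatrix_id, LinearMap.toMatrix_id, LinearMap.toMatrix_comp b c b,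
    LinearMap.toMatrix_comp c b c, Matrix.det_one_add_mul_comm]

lemma LinearMap.det_add_comp_of_comp_eq_id {A A' : M →ₗ[K] M} (hA : A ∘ₗ A' = LinearMap.id)
    (f : N →ₗ[K] M) (g : M →ₗ[K] N) :
    LinearMap.det (A + f ∘ₗ g)
      = LinearMap.det A * LinearMap.det (LinearMap.id + g ∘ₗ A' ∘ₗ f) := by
  have hfactor : A + f ∘ₗ g = A ∘ₗ (LinearMap.id + (A' ∘ₗ f) ∘ₗ g) := by
    rw [LinearMap.comp_add, LinearMap.comp_id, ← LinearMap.comp_assoc, ← LinearMap.comp_assoc,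
      hA, LinearMap.id_comp]
  rw [hfactor, LinearMap.det_comp, LinearMap.det_id_add_comp_comm]

lemma continuous_det_smul_sub_smul [TopologicalSpace K] [IsTopologicalRing K] {a b : K → K}
    (ha : Continuous a) (hb : Continuous b) (f g : M →ₗ[K] M) :
    Continuous fun μ ↦ LinearMap.det (a μ • f - b μ • g) := by
  simp_rw [← LinearMap.det_toMatrix (finBasis K M), map_sub, map_smul]
  fun_prop

end Determinants

section CrossRatio

variable (U1 U2 U3 U4 : Submodule ℝ V) (h12 : IsCompl U1 U2) (h34 : IsCompl U3 U4)

lemma crossRatio_eq : crossRatio U1 U2 U3 U4 h12 h34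
    = U1.projectionOnto U2 h12 ∘ₗ projTo U3 U4 h34 ∘ₗ U1.subtype :=
  rfl

lemma projectionOnto_comp_smul_projTo_add_smul_projTo_comp_subtype (c d : ℝ) :
    U1.projectionOnto U2 h12 ∘ₗ (c • projTo U3 U4 h34 + d • projTo U4 U3 h34.symm) ∘ₗ U1.subtype
      = d • LinearMap.id + (c - d) • crossRatio U1 U2 U3 U4 h12 h34 := by
  rw [projTo_eq_projection U4 U3 h34.symm, projection_eq_id_sub_projection h34,
    ← projTo_eq_projection U3 U4 h34, crossRatio_eq]
  simp only [LinearMap.add_comp, LinearMap.comp_add, LinearMap.smul_comp, LinearMap.comp_smul,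
    LinearMap.sub_comp, LinearMap.comp_sub, LinearMap.id_comp, projectionOnto_comp_subtype]
  module

lemma sub_reflPair_comp_reflPair_eq (lam : ℝ) :
    lam • LinearMap.id - reflPair U1 U2 h12 ∘ₗ reflPair U3 U4 h34
      = ((lam + 1) • projTo U3 U4 h34 + (1 - lam) • projTo U4 U3 h34.symm
          + (-2 : ℝ) • projTo U1 U2 h12) ∘ₗ reflPair U3 U4 h34 := by
  have hcoef : (lam + 1) • projTo U3 U4 h34 + (1 - lam) • projTo U4 U3 h34.symm
      + (-2 : ℝ) • projTo U1 U2 h12 = lam • reflPair U3 U4 h34 - reflPair U1 U2 h12 := by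
    rw [reflPair, reflPair, projTo_eq_projection U2 U1 h12.symm,
      projection_eq_id_sub_projection h12, ← projTo_eq_projection U1 U2 h12,
      ← projTo_add_projTo U3 U4 h34]
    module
  rw [hcoef, LinearMap.sub_comp, LinearMap.smul_comp, reflPair_comp_reflPair]

variable [FiniteDimensional ℝ V] {n : ℕ}

lemma det_sub_reflPair_comp_reflPair_of_sq_ne_one (hd1 : finrank ℝ U1 = n) (hd3 : finrank ℝ U3 = n)
    (hd4 : finrank ℝ U4 = n) {lam : ℝ}
    (hlam : lam ^ 2 ≠ 1) :
    LinearMap.det (lam • LinearMap.id - reflPair U1 U2 h12 ∘ₗ reflPair U3 U4 h34)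
      = LinearMap.det ((lam + 1) ^ 2 • LinearMap.id
          - (4 * lam) • crossRatio U1 U2 U3 U4 h12 h34) := by
  have ha : lam + 1 ≠ 0 := fun h ↦ hlam (by linear_combination (lam - 1) * h)
  have hb : 1 - lam ≠ 0 := fun h ↦ hlam (by linear_combination (-lam - 1) * h)
  set π := U1.projectionOnto U2 h12
  set C := crossRatio U1 U2 U3 U4 h12 h34
  have hinv : ((lam + 1) • projTo U3 U4 h34 + (1 - lam) • projTo U4 U3 h34.symm)
      ∘ₗ ((lam + 1)⁻¹ • projTo U3 U4 h34 + (1 - lam)⁻¹ • projTo U4 U3 h34.symm)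
      = LinearMap.id := by
    rw [smul_projTo_add_smul_projTo_comp, mul_inv_cancel₀ ha, mul_inv_cancel₀ hb, one_smul,
      one_smul, projTo_add_projTo]
  have hP : (-2 : ℝ) • projTo U1 U2 h12 = ((-2 : ℝ) • U1.subtype) ∘ₗ π := by
    rw [LinearMap.smul_comp]; rfl
  have hcompress : LinearMap.id + π ∘ₗ ((lam + 1)⁻¹ • projTo U3 U4 h34
        + (1 - lam)⁻¹ • projTo U4 U3 h34.symm) ∘ₗ ((-2 : ℝ) • U1.subtype)
      = (-((lam + 1) * (1 - lam))⁻¹) • ((lam + 1) ^ 2 • LinearMap.id - (4 * lam) • C) := by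
    rw [LinearMap.comp_smul, LinearMap.comp_smul,
      projectionOnto_comp_smul_projTo_add_smul_projTo_comp_subtype]
    match_scalars <;> field_simp <;> ring
  have hscalar (x : ℝ) : (lam + 1) ^ n * (1 - lam) ^ n
      * ((-((lam + 1) * (1 - lam))⁻¹) ^ n * x) * (-1) ^ n = x := by
    have hunit : (lam + 1) * (1 - lam) * -((lam + 1) * (1 - lam))⁻¹ * -1 = 1 := by field_simp
    generalize -((lam + 1) * (1 - lam))⁻¹ = c at hunit ⊢
    calc _ = ((lam + 1) * (1 - lam) * c * -1) ^ n * x := by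
          rw [mul_pow, mul_pow, mul_pow]; ring
      _ = x := by rw [hunit, one_pow, one_mul]
  rw [sub_reflPair_comp_reflPair_eq, LinearMap.det_comp, det_reflPair, hP,
    LinearMap.det_add_comp_of_comp_eq_id hinv, det_smul_projTo_add_smul_projTo, hcompress,
    LinearMap.det_smul, hd1, hd3, hd4]
  exact hscalar _

lemma det_sub_reflPair_comp_reflPair (hd1 : finrank ℝ U1 = n) (hd3 : finrank ℝ U3 = n)
    (hd4 : finrank ℝ U4 = n) (lam : ℝ) :
    LinearMap.det (lam • LinearMap.id - reflPair U1 U2 h12 ∘ₗ reflPair U3 U4 h34)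
      = LinearMap.det ((lam + 1) ^ 2 • LinearMap.id
          - (4 * lam) • crossRatio U1 U2 U3 U4 h12 h34) := by
  have hlhs : Continuous fun μ : ℝ ↦
      LinearMap.det (μ • LinearMap.id - reflPair U1 U2 h12 ∘ₗ reflPair U3 U4 h34) := by
    simpa using continuous_det_smul_sub_smul continuous_id (continuous_const (y := (1 : ℝ)))
      LinearMap.id (reflPair U1 U2 h12 ∘ₗ reflPair U3 U4 h34)
  have hrhs := continuous_det_smul_sub_smul (a := fun μ : ℝ ↦ (μ + 1) ^ 2) (b := fun μ ↦ 4 * μ)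
    (by fun_prop) (by fun_prop) LinearMap.id (crossRatio U1 U2 U3 U4 h12 h34)
  refine congrFun (Continuous.ext_on ((Set.toFinite {1, -1}).countable.dense_compl ℝ) hlhs hrhs
    fun μ hμ ↦ ?_) lam
  exact det_sub_reflPair_comp_reflPair_of_sq_ne_one U1 U2 U3 U4 h12 h34 hd1 hd3 hd4
    (by simpa using hμ)

end CrossRatio

theorem stmt5_general {V : Type*} [AddCommGroup V] [Module ℝ V] [FiniteDimensional ℝ V]
    (n : ℕ)
    (U1 U2 U3 U4 : Submodule ℝ V)
    (hd1 : finrank ℝ U1 = n)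
    (hd3 : finrank ℝ U3 = n) (hd4 : finrank ℝ U4 = n)
    (h12 : IsCompl U1 U2) (h34 : IsCompl U3 U4) :
    ∀ lam : ℝ, lam ≠ 0 →
      LinearMap.det (lam • (LinearMap.id : V →ₗ[ℝ] V)
          - reflPair U1 U2 h12 ∘ₗ reflPair U3 U4 h34)
        = (4 * lam) ^ n *
          LinearMap.det (((lam + 1) ^ 2 / (4 * lam)) • (LinearMap.id : U1 →ₗ[ℝ] U1)
            - crossRatio U1 U2 U3 U4 h12 h34) := by
  intro lam hlam
  have hscale : (lam + 1) ^ 2 • LinearMap.id - (4 * lam) • crossRatio U1 U2 U3 U4 h12 h34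
      = (4 * lam) • (((lam + 1) ^ 2 / (4 * lam)) • LinearMap.id
          - crossRatio U1 U2 U3 U4 h12 h34) := by
    match_scalars <;> field_simp
  rw [det_sub_reflPair_comp_reflPair U1 U2 U3 U4 h12 h34 hd1 hd3 hd4, hscale,
    LinearMap.det_smul, hd1]

theorem stmt5 {V : Type*} [AddCommGroup V] [Module ℝ V] [FiniteDimensional ℝ V]
    (n : ℕ) (hV : finrank ℝ V = 2 * n)
    (U1 U2 U3 U4 : Submodule ℝ V)
    (hd1 : finrank ℝ U1 = n) (hd2 : finrank ℝ U2 = n)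
    (hd3 : finrank ℝ U3 = n) (hd4 : finrank ℝ U4 = n)
    (h12 : IsCompl U1 U2) (h13 : IsCompl U1 U3) (h14 : IsCompl U1 U4)
    (h23 : IsCompl U2 U3) (h24 : IsCompl U2 U4) (h34 : IsCompl U3 U4) :
    ∀ lam : ℝ, lam ≠ 0 →
      LinearMap.det (lam • (LinearMap.id : V →ₗ[ℝ] V)
          - reflPair U1 U2 h12 ∘ₗ reflPair U3 U4 h34)
        = (4 * lam) ^ n *
          LinearMap.det (((lam + 1) ^ 2 / (4 * lam)) • (LinearMap.id : U1 →ₗ[ℝ] U1)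
            - crossRatio U1 U2 U3 U4 h12 h34) :=
  stmt5_general n U1 U2 U3 U4 hd1 hd3 hd4 h12 h34
end

section
/- Let λ1, λ2, λ3 ∈ ℝ with λ1 ≠ 0, and let N, M1, M2, M3 be real n×n matrices such that N, M1 and N − M3 are invertible. Suppose (N − M2)(N − M3)⁻¹ = λ1·I, M1⁻¹(N − M1)(N − M3)⁻¹M3 = λ2·I, and M1⁻¹M2 = λ3·I. Then the matrix A = N⁻¹M1 satisfies the quadratic equation λ3(1 − λ2)·A² + (λ1 + λ2 − λ3 − 1)·A + (1 − λ1)·I = 0. -/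
theorem stmt7 {n : ℕ} (l1 l2 l3 : ℝ) (hl1 : l1 ≠ 0)
    (N M1 M2 M3 : Matrix (Fin n) (Fin n) ℝ)
    (hN : IsUnit N.det) (hM1 : IsUnit M1.det) (hNM3 : IsUnit (N - M3).det)
    (e1 : (N - M2) * (N - M3)⁻¹ = l1 • (1 : Matrix (Fin n) (Fin n) ℝ))
    (e2 : M1⁻¹ * (N - M1) * (N - M3)⁻¹ * M3 = l2 • (1 : Matrix (Fin n) (Fin n) ℝ))
    (e3 : M1⁻¹ * M2 = l3 • (1 : Matrix (Fin n) (Fin n) ℝ)) :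
    (l3 * (1 - l2)) • (N⁻¹ * M1) ^ 2 + (l1 + l2 - l3 - 1) • (N⁻¹ * M1)
      + (1 - l1) • (1 : Matrix (Fin n) (Fin n) ℝ) = 0 := by
  set A := N⁻¹ * M1 with hA
  have hNA : N * A = M1 := by
    rw [hA, ← Matrix.mul_assoc, Matrix.mul_nonsing_inv _ hN, Matrix.one_mul]
  have hM2 : M2 = l3 • M1 := by
    have h := congrArg (fun X => M1 * X) e3
    simp only [← Matrix.mul_assoc, Matrix.mul_nonsing_inv _ hM1, Matrix.one_mul,
      Matrix.mul_smul, Matrix.mul_one] at h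
    exact h
  have hC : N - l3 • M1 = l1 • (N - M3) := by
    have h := congrArg (fun X => X * (N - M3)) e1
    simp only [Matrix.mul_assoc, Matrix.nonsing_inv_mul _ hNM3, Matrix.mul_one,
      Matrix.smul_mul, Matrix.one_mul] at h
    rw [← hM2]; exact h
  set D := (1 : Matrix (Fin n) (Fin n) ℝ) - l3 • A with hD
  have hND : N * D = l1 • (N - M3) := by
    rw [hD, Matrix.mul_sub, Matrix.mul_one, Matrix.mul_smul, hNA, hC]
  have hDdet : IsUnit D.det := by
    have h1 : N.det * D.det = l1 ^ (Fintype.card (Fin n)) * (N - M3).det := by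
      rw [← Matrix.det_mul, hND, Matrix.det_smul]
    have h2 : IsUnit (N.det * D.det) := by
      rw [h1]
      exact (isUnit_iff_ne_zero.mpr (pow_ne_zero _ hl1)).mul hNM3
    exact isUnit_of_mul_isUnit_right h2
  have hInv : (N - M3)⁻¹ = l1 • (D⁻¹ * N⁻¹) := by
    apply Matrix.inv_eq_right_inv
    have hNM3' : N - M3 = l1⁻¹ • (N * D) := by
      rw [hND, smul_smul, inv_mul_cancel₀ hl1, one_smul]
    rw [hNM3', Matrix.smul_mul, Matrix.mul_smul, smul_smul, inv_mul_cancel₀ hl1, one_smul,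
      Matrix.mul_assoc, ← Matrix.mul_assoc D, Matrix.mul_nonsing_inv _ hDdet, Matrix.one_mul,
      Matrix.mul_nonsing_inv _ hN]
  have e2' : (N - M1) * (N - M3)⁻¹ * M3 = l2 • M1 := by
    have h := congrArg (fun X => M1 * X) e2
    simp only [← Matrix.mul_assoc, Matrix.mul_nonsing_inv _ hM1, Matrix.one_mul,
      Matrix.mul_smul, Matrix.mul_one] at h
    exact h
  have key0 : (N - M1) * (N - M3)⁻¹ * N = l2 • M1 + (N - M1) := by
    have hsplit : (N - M3)⁻¹ * N = (N - M3)⁻¹ * M3 + 1 := by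
      have h1 : (N - M3)⁻¹ * N = (N - M3)⁻¹ * M3 + (N - M3)⁻¹ * (N - M3) := by
        rw [← Matrix.mul_add]
        congr 1
        abel
      rw [h1, Matrix.nonsing_inv_mul _ hNM3]
    calc (N - M1) * (N - M3)⁻¹ * N = (N - M1) * ((N - M3)⁻¹ * N) := Matrix.mul_assoc _ _ _
      _ = (N - M1) * ((N - M3)⁻¹ * M3 + 1) := by rw [hsplit]
      _ = (N - M1) * (N - M3)⁻¹ * M3 + (N - M1) := by
          rw [Matrix.mul_add, Matrix.mul_one, Matrix.mul_assoc]
      _ = l2 • M1 + (N - M1) := by rw [e2']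
  have key1 : l1 • ((N - M1) * D⁻¹) = l2 • M1 + (N - M1) := by
    rw [← key0, hInv, Matrix.mul_smul, Matrix.smul_mul, Matrix.mul_assoc, Matrix.mul_assoc,
      Matrix.nonsing_inv_mul _ hN, Matrix.mul_one]
  have key2 : l1 • ((1 - A) * D⁻¹) = l2 • A + (1 - A) := by
    have h := congrArg (fun X => N⁻¹ * X) key1
    simp only [Matrix.mul_smul, Matrix.mul_add, ← Matrix.mul_assoc, Matrix.mul_sub,
      Matrix.nonsing_inv_mul _ hN] at h
    rw [← hA] at h
    convert h using 2
  have key3 : l1 • ((1 : Matrix (Fin n) (Fin n) ℝ) - A) = (l2 • A + (1 - A)) * D := by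
    have h := congrArg (fun X => X * D) key2
    simp only [Matrix.smul_mul, Matrix.mul_assoc, Matrix.nonsing_inv_mul _ hDdet,
      Matrix.mul_one] at h
    exact h
  rw [hD] at key3
  simp only [Matrix.mul_sub, Matrix.sub_mul, Matrix.add_mul, Matrix.smul_mul,
    Matrix.mul_smul, smul_smul, Matrix.mul_one, Matrix.one_mul, smul_sub] at key3
  rw [pow_two]
  linear_combination (norm := module) -key3
end

section
/- Define φ(λ1,λ2,λ3) = 1 − 2(λ1 + λ2 + λ3) + 2(λ1λ2 + λ2λ3 + λ1λ3) + λ1² + λ2² + λ3² − 4λ1λ2λ3. Let k1, k2, k3 ≥ 2 be integers with 1/k1 + 1/k2 + 1/k3 < 1, and set λ_i = sin²(π/(2k_i)) for i = 1, 2, 3. Then φ(λ1, λ2, λ3) > 0. -/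
/-- The discriminant `φ` from the paper. -/
def phi (l1 l2 l3 : ℝ) : ℝ :=
  1 - 2*(l1 + l2 + l3) + 2*(l1*l2 + l2*l3 + l1*l3) + l1^2 + l2^2 + l3^2 - 4*l1*l2*l3

theorem stmt9 (k1 k2 k3 : ℕ) (hk1 : 2 ≤ k1) (hk2 : 2 ≤ k2) (hk3 : 2 ≤ k3)
    (hhyp : (1:ℝ)/k1 + 1/k2 + 1/k3 < 1) :
    0 < phi (Real.sin (Real.pi / (2*k1)) ^ 2) (Real.sin (Real.pi / (2*k2)) ^ 2)
        (Real.sin (Real.pi / (2*k3)) ^ 2) := by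
  have hπ := Real.pi_pos
  have hk1' : (2:ℝ) ≤ (k1:ℝ) := by exact_mod_cast hk1
  have hk2' : (2:ℝ) ≤ (k2:ℝ) := by exact_mod_cast hk2
  have hk3' : (2:ℝ) ≤ (k3:ℝ) := by exact_mod_cast hk3
  have hk1p : (0:ℝ) < k1 := by linarith
  have hk2p : (0:ℝ) < k2 := by linarith
  have hk3p : (0:ℝ) < k3 := by linarith
  set A := Real.pi / k1 with hA
  set B := Real.pi / k2 with hB
  set C := Real.pi / k3 with hC
  have hA0 : 0 < A := div_pos hπ hk1p
  have hB0 : 0 < B := div_pos hπ hk2p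
  have hC0 : 0 < C := div_pos hπ hk3p
  have hA2 : A ≤ Real.pi / 2 := div_le_div_of_nonneg_left hπ.le (by norm_num) hk1'
  have hB2 : B ≤ Real.pi / 2 := div_le_div_of_nonneg_left hπ.le (by norm_num) hk2'
  have hC2 : C ≤ Real.pi / 2 := div_le_div_of_nonneg_left hπ.le (by norm_num) hk3'
  have hsum : A + B + C < Real.pi := by
    have h1 : A + B + C = Real.pi * ((1:ℝ)/k1 + 1/k2 + 1/k3) := by
      rw [hA, hB, hC]; ring
    calc A + B + C = Real.pi * ((1:ℝ)/k1 + 1/k2 + 1/k3) := h1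
      _ < Real.pi * 1 := by exact mul_lt_mul_of_pos_left hhyp hπ
      _ = Real.pi := mul_one _
  -- rewrite sin² in terms of cos
  have key : ∀ n : ℕ, (0:ℝ) < n →
      Real.sin (Real.pi / (2*n)) ^ 2 = (1 - Real.cos (Real.pi / n)) / 2 := by
    intro n hn
    have h1 : Real.pi / (n:ℝ) = 2 * (Real.pi / (2*n)) := by
      field_simp
    rw [h1, Real.cos_two_mul, Real.cos_sq']
    ring
  rw [key k1 hk1p, key k2 hk2p, key k3 hk3p]
  set x := Real.cos A with hx
  set y := Real.cos B with hy
  set z := Real.cos C with hz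
  have hphi : phi ((1-x)/2) ((1-y)/2) ((1-z)/2)
      = (1/4) * ((z + x*y)^2 - (1 - x^2)*(1 - y^2)) := by
    unfold phi; ring
  rw [hphi]
  have hsA : Real.sin A ^ 2 = 1 - x^2 := by rw [Real.sin_sq, hx]
  have hsB : Real.sin B ^ 2 = 1 - y^2 := by rw [Real.sin_sq, hy]
  have f1 : 0 < z + Real.cos (A + B) := by
    have : z + Real.cos (A + B) = Real.cos C + Real.cos (A + B) := rfl
    rw [this, Real.cos_add_cos]
    have c1 : 0 < Real.cos ((C + (A + B)) / 2) := by
      apply Real.cos_pos_of_mem_Ioo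
      constructor <;> linarith
    have c2 : 0 < Real.cos ((C - (A + B)) / 2) := by
      apply Real.cos_pos_of_mem_Ioo
      constructor <;> linarith
    positivity
  have f2 : 0 < z + Real.cos (A - B) := by
    have : z + Real.cos (A - B) = Real.cos C + Real.cos (A - B) := rfl
    rw [this, Real.cos_add_cos]
    have c1 : 0 < Real.cos ((C + (A - B)) / 2) := by
      apply Real.cos_pos_of_mem_Ioo
      constructor <;> linarith
    have c2 : 0 < Real.cos ((C - (A - B)) / 2) := by
      apply Real.cos_pos_of_mem_Ioo
      constructor <;> linarith
    positivity
  rw [Real.cos_add] at f1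
  rw [Real.cos_sub] at f2
  have hprod : 0 < (z + (x*y - Real.sin A * Real.sin B)) *
      (z + (x*y + Real.sin A * Real.sin B)) := by
    rw [hx, hy]
    exact mul_pos f1 f2
  have hsub : (1 - x^2)*(1 - y^2) = (Real.sin A * Real.sin B)^2 := by
    rw [← hsA, ← hsB]; ring
  have heq : (1/4 : ℝ) * ((z + x*y)^2 - (Real.sin A * Real.sin B)^2)
      = (1/4 : ℝ) * ((Real.cos C + (Real.cos A * Real.cos B - Real.sin A * Real.sin B)) *
        (Real.cos C + (Real.cos A * Real.cos B + Real.sin A * Real.sin B))) := by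
    rw [hx, hy, hz]; ring
  rw [hsub, heq]
  have : (0:ℝ) < 1/4 := by norm_num
  exact mul_pos this hprod
end

section
/- Call a subset S of the set of Lagrangian subspaces of (ℝ^{2n}, ω) a circle if there exist g ∈ Sp(2n,ℝ) and a nondegenerate symmetric real n×n matrix B such that S = {g·Γ_{λB} : λ ∈ ℝ} ∪ {g·L∞}, where Γ_M = {(x, Mx) : x ∈ ℝⁿ} and L∞ = {0} × ℝⁿ, and g acts on subspaces. Then: (a) any three pairwise transverse Lagrangian subspaces L1, L2, L3 of (ℝ^{2n}, ω) are contained in at least one circle; (b) if two circles S and S' both contain three pairwise transverse Lagrangians L1, L2, L3, then S = S'. In particular, three pairwise transverse Lagrangians are contained in a unique circle. -/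
open Module Submodule

/-- `ℝ^{2n} = ℝⁿ × ℝⁿ`. -/
abbrev SympV (n : ℕ) := (Fin n → ℝ) × (Fin n → ℝ)

/-- The standard symplectic form `ω((x,y),(x',y')) = ⟨x,y'⟩ - ⟨y,x'⟩`. -/
def stdOmega (n : ℕ) (p q : SympV n) : ℝ :=
  (∑ i, p.1 i * q.2 i) - ∑ i, p.2 i * q.1 i

/-- A Lagrangian: an `n`-dimensional subspace on which `ω` vanishes identically. -/
def IsLagrangian (n : ℕ) (L : Submodule ℝ (SympV n)) : Prop :=
  finrank ℝ L = n ∧ ∀ u ∈ L, ∀ v ∈ L, stdOmega n u v = 0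

/-- Membership in `Sp(2n,ℝ)` for a linear automorphism of `ℝ^{2n}`. -/
def IsSymplectic (n : ℕ) (g : SympV n ≃ₗ[ℝ] SympV n) : Prop :=
  ∀ u v, stdOmega n (g u) (g v) = stdOmega n u v

/-- `Γ_M = {(x, Mx) : x ∈ ℝⁿ}`. -/
def matGraph (n : ℕ) (M : Matrix (Fin n) (Fin n) ℝ) : Submodule ℝ (SympV n) :=
  LinearMap.graph M.mulVecLin

/-- `L∞ = {0} × ℝⁿ`. -/
def lagInfty (n : ℕ) : Submodule ℝ (SympV n) :=
  (⊥ : Submodule ℝ (Fin n → ℝ)).prod (⊤ : Submodule ℝ (Fin n → ℝ))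

/-- A circle of Lagrangians: the `Sp(2n,ℝ)`-image of
`{Γ_{λB} : λ ∈ ℝ} ∪ {L∞}` for a nondegenerate symmetric matrix `B`. -/
def IsCircle (n : ℕ) (S : Set (Submodule ℝ (SympV n))) : Prop :=
  ∃ g : SympV n ≃ₗ[ℝ] SympV n, IsSymplectic n g ∧
    ∃ B : Matrix (Fin n) (Fin n) ℝ, B.IsSymm ∧ IsUnit B.det ∧
      S = (Set.range fun lam : ℝ =>
            Submodule.map (g : SympV n →ₗ[ℝ] SympV n) (matGraph n (lam • B))) ∪
          {Submodule.map (g : SympV n →ₗ[ℝ] SympV n) (lagInfty n)}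


/-!
`Sp(2n,ℝ)` acts transitively on pairs of transverse Lagrangians, so we may take `L2 = L∞` and
`L3 = Γ₀`. Then `L1`, transverse to both, is `Γ_B` with `B` symmetric and invertible, and
`{Γ_{λB}} ∪ {L∞}` is a circle through all three.

For uniqueness, the stabilizer of the model circle `{Γ_{λB'}} ∪ {L∞}` contains the shears
(`λ ↦ λ + t`) and the quarter turn `(x, y) ↦ (B'⁻¹ y, -B' x)` (`λ ↦ -1/λ`). Composing with these,
a circle `g · {Γ_{λB'}} ∪ {g · L∞}` through `L∞` and `Γ₀` can be written with a `g` fixing both.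
Such a `g` is `(x, y) ↦ (P x, Q y)` with `Pᵀ Q = 1`, so the circle is the model circle of
`M = Q B' Qᵀ`. If it contains `Γ_B`, then `B = λ M` with `λ ≠ 0`, and the model circles of `M`
and `B` coincide.
-/

open Matrix

section

variable {n : ℕ}

theorem Matrix.IsSymm.mulVec_dotProduct {ι R : Type*} [Fintype ι] [CommSemiring R]
    {A : Matrix ι ι R} (hA : A.IsSymm) (x y : ι → R) : A *ᵥ x ⬝ᵥ y = x ⬝ᵥ A *ᵥ y := by
  rw [dotProduct_mulVec, ← mulVec_transpose, hA.eq]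

theorem Submodule.isCompl_map_equiv {R M M₂ : Type*} [Semiring R] [AddCommMonoid M]
    [AddCommMonoid M₂] [Module R M] [Module R M₂] (e : M ≃ₗ[R] M₂) {A B : Submodule R M}
    (h : IsCompl A B) :
    IsCompl (A.map e.toLinearMap) (B.map e.toLinearMap) :=
  (Submodule.orderIsoMapComap e).isCompl h

theorem Submodule.map_symm_map_equiv {R M M₂ : Type*} [Semiring R] [AddCommMonoid M]
    [AddCommMonoid M₂] [Module R M] [Module R M₂] (e : M ≃ₗ[R] M₂) (L : Submodule R M) :
    (L.map e.toLinearMap).map e.symm.toLinearMap = L :=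
  (Submodule.map_symm_eq_iff e).2 rfl

theorem Submodule.map_equiv_eq_of_mapsTo_of_finrank_eq {K V V₂ : Type*} [DivisionRing K]
    [AddCommGroup V] [AddCommGroup V₂] [Module K V] [Module K V₂] [FiniteDimensional K V₂]
    (e : V ≃ₗ[K] V₂) {L : Submodule K V} {L' : Submodule K V₂} (h : ∀ p ∈ L, e p ∈ L')
    (hd : finrank K L = finrank K L') : L.map e.toLinearMap = L' :=
  Submodule.eq_of_le_of_finrank_eq (by rintro _ ⟨p, hp, rfl⟩; exact h p hp)
    (by rw [LinearEquiv.finrank_map_eq, hd])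

theorem Submodule.image_map_trans {R M : Type*} [Semiring R] [AddCommMonoid M] [Module R M]
    (k g : M ≃ₗ[R] M) (s : Set (Submodule R M)) :
    Submodule.map (k.trans g).toLinearMap '' s =
      Submodule.map g.toLinearMap '' (Submodule.map k.toLinearMap '' s) := by
  rw [Set.image_image]
  exact Set.image_congr fun L _ => Submodule.map_comp _ _ L

theorem Submodule.image_map_image_map_symm {R M : Type*} [Semiring R] [AddCommMonoid M]
    [Module R M] (g : M ≃ₗ[R] M) (s : Set (Submodule R M)) :
    Submodule.map g.toLinearMap '' (Submodule.map g.symm.toLinearMap '' s) = s := by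
  rw [← Submodule.image_map_trans, LinearEquiv.symm_trans_self]
  simp

theorem stdOmega_eq_dotProduct (p q : SympV n) :
    stdOmega n p q = p.1 ⬝ᵥ q.2 - p.2 ⬝ᵥ q.1 := rfl

theorem stdOmega_swap (p q : SympV n) : stdOmega n p q = -stdOmega n q p := by
  simp only [stdOmega_eq_dotProduct, dotProduct_comm p.1, dotProduct_comm p.2]
  ring

noncomputable def omegaForm (n : ℕ) : LinearMap.BilinForm ℝ (SympV n) :=
  LinearMap.mk₂ ℝ (stdOmega n)
    (fun p p' q => by simp only [stdOmega_eq_dotProduct, Prod.fst_add, Prod.snd_add,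
      add_dotProduct]; ring)
    (fun c p q => by simp only [stdOmega_eq_dotProduct, Prod.smul_fst, Prod.smul_snd,
      smul_dotProduct, smul_eq_mul]; ring)
    (fun p q q' => by simp only [stdOmega_eq_dotProduct, Prod.fst_add, Prod.snd_add,
      dotProduct_add]; ring)
    (fun c p q => by simp only [stdOmega_eq_dotProduct, Prod.smul_fst, Prod.smul_snd,
      dotProduct_smul, smul_eq_mul]; ring)

@[simp] theorem omegaForm_apply (p q : SympV n) : omegaForm n p q = stdOmega n p q := rfl

theorem eq_zero_of_forall_stdOmega_eq_zero {p : SympV n} (h : ∀ q, stdOmega n q p = 0) :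
    p = 0 := by
  have h1 := h (0, p.1)
  have h2 := h (p.2, 0)
  simp only [stdOmega_eq_dotProduct, zero_dotProduct, zero_sub, neg_eq_zero, sub_zero,
    dotProduct_self_eq_zero] at h1 h2
  exact Prod.ext h1 h2

theorem injective_of_forall_stdOmega_eq {f : SympV n →ₗ[ℝ] SympV n}
    (hf : ∀ u v, stdOmega n (f u) (f v) = stdOmega n u v) : Function.Injective f :=
  (injective_iff_map_eq_zero f).2 fun u hu => eq_zero_of_forall_stdOmega_eq_zero fun q => by
    rw [← hf, hu, ← omegaForm_apply, map_zero]

theorem eq_zero_of_isotropic_of_stdOmega_eq_zero {L L' : Submodule ℝ (SympV n)}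
    (hL : ∀ u ∈ L, ∀ v ∈ L, stdOmega n u v = 0) (h : L ⊔ L' = ⊤) {u : SympV n} (hu : u ∈ L)
    (hu' : ∀ v ∈ L', stdOmega n v u = 0) : u = 0 := by
  refine eq_zero_of_forall_stdOmega_eq_zero fun q => ?_
  obtain ⟨a, ha, b, hb, rfl⟩ := Submodule.mem_sup.1 (h ▸ Submodule.mem_top : q ∈ L ⊔ L')
  rw [← omegaForm_apply, map_add, LinearMap.add_apply, omegaForm_apply, omegaForm_apply,
    hL a ha u hu, hu' b hb, add_zero]

theorem IsSymplectic.symm {g : SympV n ≃ₗ[ℝ] SympV n} (hg : IsSymplectic n g) :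
    IsSymplectic n g.symm := fun u v => by
  rw [← hg, g.apply_symm_apply, g.apply_symm_apply]

theorem IsSymplectic.trans {g h : SympV n ≃ₗ[ℝ] SympV n} (hg : IsSymplectic n g)
    (hh : IsSymplectic n h) : IsSymplectic n (g.trans h) := fun u v => by
  rw [LinearEquiv.trans_apply, LinearEquiv.trans_apply, hh, hg]

theorem IsLagrangian.map {g : SympV n ≃ₗ[ℝ] SympV n} (hg : IsSymplectic n g)
    {L : Submodule ℝ (SympV n)} (hL : IsLagrangian n L) :
    IsLagrangian n (L.map g.toLinearMap) := by
  refine ⟨by rw [LinearEquiv.finrank_map_eq, hL.1], ?_⟩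
  rintro _ ⟨u, hu, rfl⟩ _ ⟨v, hv, rfl⟩
  exact (hg u v).trans (hL.2 u hu v hv)

theorem mem_matGraph {A : Matrix (Fin n) (Fin n) ℝ} {p : SympV n} :
    p ∈ matGraph n A ↔ p.2 = A *ᵥ p.1 :=
  LinearMap.mem_graph_iff _ _

theorem mem_lagInfty {p : SympV n} : p ∈ lagInfty n ↔ p.1 = 0 := by
  simp [lagInfty, Submodule.mem_prod]

theorem matGraph_injective : Function.Injective (matGraph n) := fun A B h =>
  Matrix.ext_iff_mulVec.2 fun x =>
    (mem_matGraph.1 (h ▸ mem_matGraph.2 rfl : ((x, A *ᵥ x) : SympV n) ∈ matGraph n B))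

theorem finrank_matGraph (A : Matrix (Fin n) (Fin n) ℝ) : finrank ℝ (matGraph n A) = n := by
  rw [matGraph, LinearMap.graph_eq_range_prod, LinearMap.finrank_range_of_inj
    (fun x y h => congrArg Prod.fst h), finrank_fin_fun]

theorem finrank_lagInfty : finrank ℝ (lagInfty n) = n := by
  have h : lagInfty n = LinearMap.range (LinearMap.inr ℝ (Fin n → ℝ) (Fin n → ℝ)) := by
    ext p
    rw [mem_lagInfty, LinearMap.range_inr, LinearMap.mem_ker, LinearMap.fst_apply]
  rw [h, LinearMap.finrank_range_of_inj LinearMap.inr_injective, finrank_fin_fun]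

theorem exists_eq_matGraph_of_isCompl_lagInfty {L : Submodule ℝ (SympV n)}
    (h : IsCompl L (lagInfty n)) : ∃ A : Matrix (Fin n) (Fin n) ℝ, L = matGraph n A := by
  have hbij : Function.Bijective (Prod.fst ∘ L.subtype) := by
    refine ⟨fun u v huv => Subtype.ext ?_, fun x => ?_⟩
    · have hmem : (u : SympV n) - v ∈ lagInfty n := mem_lagInfty.2 (sub_eq_zero.2 huv)
      exact sub_eq_zero.1 (Submodule.disjoint_def.1 h.disjoint _ (L.sub_mem u.2 v.2) hmem)
    · obtain ⟨u, hu, w, hw, huw⟩ := Submodule.mem_sup.1 (h.sup_eq_top ▸ Submodule.mem_top :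
        ((x, 0) : SympV n) ∈ L ⊔ lagInfty n)
      refine ⟨⟨u, hu⟩, ?_⟩
      simpa [mem_lagInfty.1 hw] using congrArg Prod.fst huw
  obtain ⟨f, rfl⟩ := Submodule.exists_eq_graph hbij
  exact ⟨LinearMap.toMatrix' f, congrArg LinearMap.graph
    (LinearMap.ext fun x => (LinearMap.toMatrix'_mulVec f x).symm)⟩

theorem isSymm_of_isotropic_matGraph {A : Matrix (Fin n) (Fin n) ℝ}
    (h : ∀ u ∈ matGraph n A, ∀ v ∈ matGraph n A, stdOmega n u v = 0) : A.IsSymm := by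
  refine Matrix.ext_iff_mulVec.2 fun y => dotProduct_eq _ _ fun x => ?_
  have hyx := h (y, A *ᵥ y) (mem_matGraph.2 rfl) (x, A *ᵥ x) (mem_matGraph.2 rfl)
  rw [stdOmega_eq_dotProduct, sub_eq_zero] at hyx
  rw [mulVec_transpose, ← dotProduct_mulVec, hyx]

theorem isUnit_det_of_disjoint_matGraph_zero {A : Matrix (Fin n) (Fin n) ℝ}
    (h : Disjoint (matGraph n A) (matGraph n 0)) : IsUnit A.det := by
  rw [← Matrix.isUnit_iff_isUnit_det, ← Matrix.mulVec_injective_iff_isUnit]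
  refine (injective_iff_map_eq_zero A.mulVecLin).2 fun x hx => ?_
  have hmem : ((x, 0) : SympV n) ∈ matGraph n A := mem_matGraph.2 hx.symm
  exact congrArg Prod.fst (Submodule.disjoint_def.1 h _ hmem (mem_matGraph.2 (zero_mulVec x).symm))

theorem exists_isSymm_isUnit_eq_matGraph {K : Submodule ℝ (SympV n)}
    (hK : ∀ u ∈ K, ∀ v ∈ K, stdOmega n u v = 0) (hinf : IsCompl K (lagInfty n))
    (h0 : Disjoint K (matGraph n 0)) :
    ∃ B : Matrix (Fin n) (Fin n) ℝ, B.IsSymm ∧ IsUnit B.det ∧ K = matGraph n B := by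
  obtain ⟨B, rfl⟩ := exists_eq_matGraph_of_isCompl_lagInfty hinf
  exact ⟨B, isSymm_of_isotropic_matGraph hK, isUnit_det_of_disjoint_matGraph_zero h0, rfl⟩

/-- The `fⱼ` are the preimages of the coordinate functionals of a basis `eᵢ` of `L'` under the
isomorphism `L ≃ Dual L'`, `u ↦ ω(·, u)`. -/
theorem exists_stdOmega_eq_ite {L L' : Submodule ℝ (SympV n)} (hL : IsLagrangian n L)
    (hL' : finrank ℝ L' = n) (h : IsCompl L L') :
    ∃ e f : Fin n → SympV n, (∀ i, e i ∈ L') ∧ (∀ i, f i ∈ L) ∧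
      ∀ i j, stdOmega n (e i) (f j) = if i = j then 1 else 0 := by
  classical
  let b := Module.finBasisOfFinrankEq ℝ L' hL'
  let φ : L →ₗ[ℝ] Module.Dual ℝ L' :=
    L'.subtype.dualMap ∘ₗ (omegaForm n).flip ∘ₗ L.subtype
  have hφ : Function.Injective φ := (injective_iff_map_eq_zero φ).2 fun u hu =>
    Subtype.ext <| eq_zero_of_isotropic_of_stdOmega_eq_zero hL.2 h.sup_eq_top u.2
      fun v hv => LinearMap.congr_fun hu ⟨v, hv⟩
  have hdim : finrank ℝ L = finrank ℝ (Module.Dual ℝ L') := by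
    rw [Subspace.dual_finrank_eq, hL.1, hL']
  let Φ := LinearEquiv.ofBijective φ
    ⟨hφ, (LinearMap.injective_iff_surjective_of_finrank_eq_finrank hdim).1 hφ⟩
  refine ⟨fun i => b i, fun j => Φ.symm (b.coord j), fun i => (b i).2,
    fun j => (Φ.symm (b.coord j)).2, fun i j => ?_⟩
  have := LinearMap.congr_fun (Φ.apply_symm_apply (b.coord j)) (b i)
  rw [Basis.coord_apply, Basis.repr_self, Finsupp.single_apply] at this
  exact this

noncomputable def frameMap (e f : Fin n → SympV n) : SympV n →ₗ[ℝ] SympV n :=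
  (Fintype.linearCombination ℝ e).coprod (Fintype.linearCombination ℝ f)

theorem frameMap_apply (e f : Fin n → SympV n) (p : SympV n) :
    frameMap e f p = ∑ i, p.1 i • e i + ∑ i, p.2 i • f i := by
  simp [frameMap, Fintype.linearCombination_apply]

theorem stdOmega_frameMap {e f : Fin n → SympV n} (he : ∀ i j, stdOmega n (e i) (e j) = 0)
    (hf : ∀ i j, stdOmega n (f i) (f j) = 0)
    (hef : ∀ i j, stdOmega n (e i) (f j) = if i = j then 1 else 0) (u v : SympV n) :
    stdOmega n (frameMap e f u) (frameMap e f v) = stdOmega n u v := by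
  have hfe : ∀ i j, stdOmega n (f i) (e j) = -if j = i then 1 else 0 := fun i j => by
    rw [stdOmega_swap, hef]
  simp only [← omegaForm_apply, frameMap_apply, map_add, map_sum, map_smul,
    LinearMap.add_apply, LinearMap.sum_apply, LinearMap.smul_apply]
  simp only [he, hf, hef, hfe, smul_eq_mul, mul_comm, zero_mul, mul_neg, neg_mul, ite_mul,
    one_mul, Finset.sum_const_zero, Finset.sum_neg_distrib, Finset.sum_ite_eq, Finset.sum_ite_eq',
    Finset.mem_univ, ↓reduceIte, zero_add, add_zero, omegaForm_apply, stdOmega_eq_dotProduct,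
    dotProduct]
  ring

theorem exists_isSymplectic_map_lagInfty_map_matGraph_zero {L L' : Submodule ℝ (SympV n)}
    (hL : IsLagrangian n L) (hL' : IsLagrangian n L') (h : IsCompl L L') :
    ∃ G : SympV n ≃ₗ[ℝ] SympV n, IsSymplectic n G ∧
      (lagInfty n).map G.toLinearMap = L ∧ (matGraph n 0).map G.toLinearMap = L' := by
  obtain ⟨e, f, he, hf, hef⟩ := exists_stdOmega_eq_ite hL hL'.1 h
  have hG := stdOmega_frameMap (fun i j => hL'.2 _ (he i) _ (he j))
    (fun i j => hL.2 _ (hf i) _ (hf j)) hef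
  let G := LinearEquiv.ofInjectiveEndo (frameMap e f) (injective_of_forall_stdOmega_eq hG)
  refine ⟨G, hG, ?_, ?_⟩
  · refine Submodule.map_equiv_eq_of_mapsTo_of_finrank_eq G (fun p hp => ?_)
      (by rw [finrank_lagInfty, hL.1])
    change frameMap e f p ∈ L
    simp only [frameMap_apply, mem_lagInfty.1 hp, Pi.zero_apply, zero_smul,
      Finset.sum_const_zero, zero_add]
    exact Submodule.sum_mem _ fun i _ => L.smul_mem _ (hf i)
  · refine Submodule.map_equiv_eq_of_mapsTo_of_finrank_eq G (fun p hp => ?_)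
      (by rw [finrank_matGraph, hL'.1])
    change frameMap e f p ∈ L'
    simp only [frameMap_apply, mem_matGraph.1 hp, zero_mulVec, Pi.zero_apply, zero_smul,
      Finset.sum_const_zero, add_zero]
    exact Submodule.sum_mem _ fun i _ => L'.smul_mem _ (he i)

theorem exists_isSymm_isUnit_eq_map_matGraph {G : SympV n ≃ₗ[ℝ] SympV n}
    (hG : IsSymplectic n G) {L : Submodule ℝ (SympV n)} (hL : IsLagrangian n L)
    (hinf : IsCompl L ((lagInfty n).map G.toLinearMap))
    (h0 : IsCompl L ((matGraph n 0).map G.toLinearMap)) :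
    ∃ B : Matrix (Fin n) (Fin n) ℝ, B.IsSymm ∧ IsUnit B.det ∧
      L = (matGraph n B).map G.toLinearMap := by
  have hinf' := Submodule.isCompl_map_equiv G.symm hinf
  have h0' := Submodule.isCompl_map_equiv G.symm h0
  rw [Submodule.map_symm_map_equiv] at hinf' h0'
  obtain ⟨B, hBs, hB, hLB⟩ := exists_isSymm_isUnit_eq_matGraph (hL.map hG.symm).2 hinf' h0'.disjoint
  refine ⟨B, hBs, hB, ?_⟩
  have hL_eq := Submodule.map_symm_map_equiv G.symm L
  rw [LinearEquiv.symm_symm] at hL_eq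
  rw [← hLB, hL_eq]

def circleModel (n : ℕ) (B : Matrix (Fin n) (Fin n) ℝ) : Set (Submodule ℝ (SympV n)) :=
  Set.range (fun lam : ℝ => matGraph n (lam • B)) ∪ {lagInfty n}

theorem isCircle_iff {S : Set (Submodule ℝ (SympV n))} :
    IsCircle n S ↔ ∃ g : SympV n ≃ₗ[ℝ] SympV n, IsSymplectic n g ∧
      ∃ B : Matrix (Fin n) (Fin n) ℝ, B.IsSymm ∧ IsUnit B.det ∧
        S = Submodule.map g.toLinearMap '' circleModel n B := by
  simp only [IsCircle, circleModel, Set.image_union, Set.image_singleton, ← Set.range_comp]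
  rfl

theorem IsCircle.image {S : Set (Submodule ℝ (SympV n))} (hS : IsCircle n S)
    {h : SympV n ≃ₗ[ℝ] SympV n} (hh : IsSymplectic n h) :
    IsCircle n (Submodule.map h.toLinearMap '' S) := by
  obtain ⟨g, hg, B, hBs, hB, rfl⟩ := isCircle_iff.1 hS
  exact isCircle_iff.2
    ⟨g.trans h, hg.trans hh, B, hBs, hB, (Submodule.image_map_trans g h _).symm⟩

theorem matGraph_mem_circleModel (B : Matrix (Fin n) (Fin n) ℝ) :
    matGraph n B ∈ circleModel n B :=
  Or.inl ⟨1, congrArg (matGraph n) (one_smul ℝ B)⟩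

theorem matGraph_zero_mem_circleModel (B : Matrix (Fin n) (Fin n) ℝ) :
    matGraph n 0 ∈ circleModel n B :=
  Or.inl ⟨0, congrArg (matGraph n) (zero_smul ℝ B)⟩

theorem lagInfty_mem_circleModel (B : Matrix (Fin n) (Fin n) ℝ) :
    lagInfty n ∈ circleModel n B :=
  Or.inr rfl

theorem circleModel_smul (B : Matrix (Fin n) (Fin n) ℝ) {c : ℝ} (hc : c ≠ 0) :
    circleModel n (c • B) = circleModel n B := by
  have h : (fun lam : ℝ => matGraph n (lam • c • B)) = fun lam => matGraph n ((lam * c) • B) := by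
    simp only [smul_smul]
  rw [circleModel, circleModel, h]
  congr 1
  exact (mulRight_bijective₀ c hc).surjective.range_comp (fun lam : ℝ => matGraph n (lam • B))

theorem circleModel_eq_of_matGraph_mem {M B : Matrix (Fin n) (Fin n) ℝ} (hB : IsUnit B.det)
    (h : matGraph n B ∈ circleModel n M) : circleModel n M = circleModel n B := by
  rcases isEmpty_or_nonempty (Fin n) with hn | hn
  · rw [Subsingleton.elim M B]
  rcases h with ⟨lam, hlam⟩ | h
  · obtain rfl : lam • M = B := matGraph_injective hlam
    refine (circleModel_smul M fun h0 => ?_).symm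
    rw [h0, zero_smul, det_zero] at hB
    exact not_isUnit_zero hB
  · obtain ⟨x, hx⟩ := exists_ne (0 : Fin n → ℝ)
    have hmem : ((x, B *ᵥ x) : SympV n) ∈ matGraph n B := mem_matGraph.2 rfl
    rw [Set.mem_singleton_iff.1 h, mem_lagInfty] at hmem
    exact absurd hmem hx

noncomputable def shear (C : Matrix (Fin n) (Fin n) ℝ) : SympV n ≃ₗ[ℝ] SympV n :=
  (LinearEquiv.refl ℝ _).skewProd (LinearEquiv.refl ℝ _) C.mulVecLin

theorem shear_apply (C : Matrix (Fin n) (Fin n) ℝ) (p : SympV n) :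
    shear C p = (p.1, p.2 + C *ᵥ p.1) := rfl

theorem isSymplectic_shear {C : Matrix (Fin n) (Fin n) ℝ} (hC : C.IsSymm) :
    IsSymplectic n (shear C) := fun u v => by
  simp only [shear_apply, stdOmega_eq_dotProduct, dotProduct_add, add_dotProduct]
  rw [hC.mulVec_dotProduct]
  ring

theorem map_shear_matGraph (C A : Matrix (Fin n) (Fin n) ℝ) :
    (matGraph n A).map (shear C).toLinearMap = matGraph n (A + C) :=
  Submodule.map_equiv_eq_of_mapsTo_of_finrank_eq _ (fun p hp => mem_matGraph.2 <| by
    rw [shear_apply, mem_matGraph.1 hp, add_mulVec]) (by rw [finrank_matGraph, finrank_matGraph])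

theorem map_shear_lagInfty (C : Matrix (Fin n) (Fin n) ℝ) :
    (lagInfty n).map (shear C).toLinearMap = lagInfty n :=
  Submodule.map_equiv_eq_of_mapsTo_of_finrank_eq _
    (fun _ hp => mem_lagInfty.2 (mem_lagInfty.1 hp)) rfl

theorem image_shear_circleModel (B : Matrix (Fin n) (Fin n) ℝ) (t : ℝ) :
    Submodule.map (shear (t • B)).toLinearMap '' circleModel n B = circleModel n B := by
  have h : (fun lam : ℝ => (matGraph n (lam • B)).map (shear (t • B)).toLinearMap) =
      fun lam => matGraph n ((lam + t) • B) := by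
    simp only [map_shear_matGraph, add_smul]
  rw [circleModel, Set.image_union, Set.image_singleton, map_shear_lagInfty, ← Set.range_comp,
    Function.comp_def, h]
  congr 1
  exact (add_right_surjective t).range_comp (fun lam : ℝ => matGraph n (lam • B))

noncomputable def quarterTurn (B : Matrix (Fin n) (Fin n) ℝ) (hB : IsUnit B.det) :
    SympV n ≃ₗ[ℝ] SympV n where
  toFun p := (B⁻¹ *ᵥ p.2, -(B *ᵥ p.1))
  invFun p := (-(B⁻¹ *ᵥ p.2), B *ᵥ p.1)
  map_add' p q := by simp only [Prod.fst_add, Prod.snd_add, mulVec_add, neg_add, Prod.mk_add_mk]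
  map_smul' c p := by simp [mulVec_smul]
  left_inv p := by simp [mulVec_neg, mulVec_mulVec, nonsing_inv_mul _ hB, mul_nonsing_inv _ hB]
  right_inv p := by simp [mulVec_neg, mulVec_mulVec, nonsing_inv_mul _ hB, mul_nonsing_inv _ hB]

section QuarterTurn

variable {B : Matrix (Fin n) (Fin n) ℝ} (hB : IsUnit B.det)
include hB

theorem quarterTurn_apply (p : SympV n) :
    quarterTurn B hB p = (B⁻¹ *ᵥ p.2, -(B *ᵥ p.1)) := rfl

theorem isSymplectic_quarterTurn (hBs : B.IsSymm) : IsSymplectic n (quarterTurn B hB) :=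
  fun u v => by
    simp only [quarterTurn_apply, stdOmega_eq_dotProduct, dotProduct_neg, neg_dotProduct]
    rw [hBs.inv.mulVec_dotProduct, hBs.mulVec_dotProduct, mulVec_mulVec, mulVec_mulVec,
      nonsing_inv_mul _ hB, mul_nonsing_inv _ hB, one_mulVec, one_mulVec, dotProduct_comm u.2]
    ring

theorem map_quarterTurn_lagInfty :
    (lagInfty n).map (quarterTurn B hB).toLinearMap = matGraph n 0 :=
  Submodule.map_equiv_eq_of_mapsTo_of_finrank_eq _ (fun p hp => mem_matGraph.2 <| by
    simp [quarterTurn_apply, mem_lagInfty.1 hp]) (by rw [finrank_lagInfty, finrank_matGraph])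

theorem map_quarterTurn_matGraph_zero :
    (matGraph n 0).map (quarterTurn B hB).toLinearMap = lagInfty n :=
  Submodule.map_equiv_eq_of_mapsTo_of_finrank_eq _ (fun p hp => mem_lagInfty.2 <| by
    simp [quarterTurn_apply, mem_matGraph.1 hp]) (by rw [finrank_lagInfty, finrank_matGraph])

theorem map_quarterTurn_matGraph_smul {lam : ℝ} (hlam : lam ≠ 0) :
    (matGraph n (lam • B)).map (quarterTurn B hB).toLinearMap = matGraph n ((-lam⁻¹) • B) :=
  Submodule.map_equiv_eq_of_mapsTo_of_finrank_eq _ (fun p hp => mem_matGraph.2 <| by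
    simp [quarterTurn_apply, mem_matGraph.1 hp, neg_mulVec, mulVec_mulVec,
      nonsing_inv_mul _ hB, smul_smul, hlam]) (by rw [finrank_matGraph, finrank_matGraph])

theorem map_quarterTurn_map_quarterTurn (L : Submodule ℝ (SympV n)) :
    (L.map (quarterTurn B hB).toLinearMap).map (quarterTurn B hB).toLinearMap = L := by
  have h : (quarterTurn B hB).toLinearMap ∘ₗ (quarterTurn B hB).toLinearMap = -LinearMap.id := by
    refine LinearMap.ext fun p => ?_
    simp only [LinearMap.comp_apply, LinearEquiv.coe_coe, quarterTurn_apply, mulVec_neg,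
      mulVec_mulVec, nonsing_inv_mul _ hB, mul_nonsing_inv _ hB, one_mulVec,
      LinearMap.neg_apply, LinearMap.id_coe, id_eq]
    rfl
  rw [← Submodule.map_comp, h, Submodule.map_neg, Submodule.map_id]

theorem image_quarterTurn_circleModel :
    Submodule.map (quarterTurn B hB).toLinearMap '' circleModel n B = circleModel n B := by
  have hsub : ∀ X ∈ circleModel n B, X.map (quarterTurn B hB).toLinearMap ∈ circleModel n B := by
    rintro X (⟨lam, rfl⟩ | rfl)
    · beta_reduce
      rcases eq_or_ne lam 0 with rfl | hlam
      · rw [zero_smul, map_quarterTurn_matGraph_zero]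
        exact lagInfty_mem_circleModel B
      · rw [map_quarterTurn_matGraph_smul hB hlam]
        exact Or.inl ⟨_, rfl⟩
    · rw [map_quarterTurn_lagInfty]
      exact matGraph_zero_mem_circleModel B
  exact (Set.image_subset_iff.2 hsub).antisymm fun X hX =>
    ⟨_, hsub X hX, map_quarterTurn_map_quarterTurn hB X⟩

end QuarterTurn

section Stabilizer

variable {B : Matrix (Fin n) (Fin n) ℝ} (hBs : B.IsSymm)
include hBs

theorem exists_stabilizer_map_lagInfty (hB : IsUnit B.det) {X : Submodule ℝ (SympV n)}
    (hX : X ∈ circleModel n B) :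
    ∃ k : SympV n ≃ₗ[ℝ] SympV n, IsSymplectic n k ∧
      Submodule.map k.toLinearMap '' circleModel n B = circleModel n B ∧
      (lagInfty n).map k.toLinearMap = X := by
  rcases hX with ⟨lam, rfl⟩ | rfl
  · refine ⟨(quarterTurn B hB).trans (shear (lam • B)),
      (isSymplectic_quarterTurn hB hBs).trans (isSymplectic_shear (hBs.smul lam)), ?_, ?_⟩
    · rw [Submodule.image_map_trans, image_quarterTurn_circleModel, image_shear_circleModel]
    · rw [LinearEquiv.coe_trans, Submodule.map_comp, map_quarterTurn_lagInfty,
        map_shear_matGraph, zero_add]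
  · exact ⟨LinearEquiv.refl ℝ _, fun _ _ => rfl, by simp, by simp⟩

theorem exists_stabilizer_map_matGraph_zero {X : Submodule ℝ (SympV n)}
    (hX : X ∈ circleModel n B) (hX' : X ≠ lagInfty n) :
    ∃ k : SympV n ≃ₗ[ℝ] SympV n, IsSymplectic n k ∧
      Submodule.map k.toLinearMap '' circleModel n B = circleModel n B ∧
      (lagInfty n).map k.toLinearMap = lagInfty n ∧ (matGraph n 0).map k.toLinearMap = X := by
  obtain ⟨lam, rfl⟩ := hX.resolve_right hX'
  exact ⟨shear (lam • B), isSymplectic_shear (hBs.smul lam), image_shear_circleModel B lam,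
    map_shear_lagInfty _, by rw [map_shear_matGraph, zero_add]⟩

end Stabilizer

theorem exists_isSymplectic_fix_lagInfty_matGraph_zero {B : Matrix (Fin n) (Fin n) ℝ}
    (hBs : B.IsSymm) (hB : IsUnit B.det) {g : SympV n ≃ₗ[ℝ] SympV n} (hg : IsSymplectic n g)
    (hinf : lagInfty n ∈ Submodule.map g.toLinearMap '' circleModel n B)
    (h0 : matGraph n 0 ∈ Submodule.map g.toLinearMap '' circleModel n B) :
    ∃ g' : SympV n ≃ₗ[ℝ] SympV n, IsSymplectic n g' ∧
      Submodule.map g'.toLinearMap '' circleModel n B =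
        Submodule.map g.toLinearMap '' circleModel n B ∧
      (lagInfty n).map g'.toLinearMap = lagInfty n ∧
      (matGraph n 0).map g'.toLinearMap = matGraph n 0 := by
  obtain ⟨X, hX, hgX⟩ := hinf
  obtain ⟨k, hk, hkB, hkX⟩ := exists_stabilizer_map_lagInfty hBs hB hX
  have hS : Submodule.map (k.trans g).toLinearMap '' circleModel n B =
      Submodule.map g.toLinearMap '' circleModel n B := by
    rw [Submodule.image_map_trans, hkB]
  have hinf' : (lagInfty n).map (k.trans g).toLinearMap = lagInfty n := by
    rw [LinearEquiv.coe_trans, Submodule.map_comp, hkX, hgX]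
  rw [← hS] at h0
  obtain ⟨Y, hY, hgY⟩ := h0
  by_cases hY' : Y = lagInfty n
  · -- only possible for `n = 0`
    have h0inf : matGraph n 0 = lagInfty n := by rw [← hgY, hY', hinf']
    exact ⟨k.trans g, hk.trans hg, hS, hinf', by rw [h0inf, hinf']⟩
  obtain ⟨k', hk', hk'B, hk'inf, hk'0⟩ := exists_stabilizer_map_matGraph_zero hBs hY hY'
  refine ⟨k'.trans (k.trans g), hk'.trans (hk.trans hg),
    by rw [Submodule.image_map_trans, hk'B, hS], ?_, ?_⟩
  · rw [LinearEquiv.coe_trans, Submodule.map_comp, hk'inf, hinf']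
  · rw [LinearEquiv.coe_trans, Submodule.map_comp, hk'0, hgY]

theorem exists_eq_mulVec_of_map_lagInfty_of_map_matGraph_zero {g : SympV n ≃ₗ[ℝ] SympV n}
    (hg : IsSymplectic n g) (hinf : (lagInfty n).map g.toLinearMap = lagInfty n)
    (h0 : (matGraph n 0).map g.toLinearMap = matGraph n 0) :
    ∃ P Q : Matrix (Fin n) (Fin n) ℝ, Pᵀ * Q = 1 ∧ ∀ p, g p = (P *ᵥ p.1, Q *ᵥ p.2) := by
  have hx : ∀ x, (g (x, 0)).2 = 0 := fun x => by
    have hmem : g (x, 0) ∈ (matGraph n 0).map g.toLinearMap :=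
      ⟨(x, 0), mem_matGraph.2 (zero_mulVec x).symm, rfl⟩
    rw [h0, mem_matGraph, zero_mulVec] at hmem
    exact hmem
  have hy : ∀ y, (g (0, y)).1 = 0 := fun y => by
    have hmem : g (0, y) ∈ (lagInfty n).map g.toLinearMap := ⟨(0, y), mem_lagInfty.2 rfl, rfl⟩
    rwa [hinf, mem_lagInfty] at hmem
  let P := LinearMap.toMatrix' (LinearMap.fst ℝ _ _ ∘ₗ g.toLinearMap ∘ₗ LinearMap.inl ℝ _ _)
  let Q := LinearMap.toMatrix' (LinearMap.snd ℝ _ _ ∘ₗ g.toLinearMap ∘ₗ LinearMap.inr ℝ _ _)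
  have hP : ∀ x, P *ᵥ x = (g (x, 0)).1 := LinearMap.toMatrix'_mulVec _
  have hQ : ∀ y, Q *ᵥ y = (g (0, y)).2 := LinearMap.toMatrix'_mulVec _
  have hgPQ : ∀ p, g p = (P *ᵥ p.1, Q *ᵥ p.2) := fun p => by
    rw [hP, hQ]
    conv_lhs => rw [← Prod.fst_add_snd p, map_add]
    ext <;> simp [hx, hy]
  refine ⟨P, Q, ext_iff_mulVec.2 fun y => dotProduct_eq _ _ fun x => ?_, hgPQ⟩
  have hω := hg (x, 0) (0, y)
  simp only [hgPQ, stdOmega_eq_dotProduct, mulVec_zero, dotProduct_zero, sub_zero] at hω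
  rw [← mulVec_mulVec, one_mulVec, dotProduct_comm, dotProduct_mulVec, vecMul_transpose, hω,
    dotProduct_comm]

theorem map_matGraph_of_eq_mulVec {g : SympV n ≃ₗ[ℝ] SympV n} {P Q : Matrix (Fin n) (Fin n) ℝ}
    (hPQ : Pᵀ * Q = 1) (hg : ∀ p, g p = (P *ᵥ p.1, Q *ᵥ p.2)) (C : Matrix (Fin n) (Fin n) ℝ) :
    (matGraph n C).map g.toLinearMap = matGraph n (Q * C * Qᵀ) := by
  have hQP : Qᵀ * P = 1 := by simpa using congrArg transpose hPQ
  refine Submodule.map_equiv_eq_of_mapsTo_of_finrank_eq _ (fun p hp => mem_matGraph.2 ?_)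
    (by rw [finrank_matGraph, finrank_matGraph])
  simp only [hg, mem_matGraph.1 hp, mulVec_mulVec]
  rw [Matrix.mul_assoc (Q * C), hQP, Matrix.mul_one]

theorem exists_image_circleModel_eq {g : SympV n ≃ₗ[ℝ] SympV n} (hg : IsSymplectic n g)
    (hinf : (lagInfty n).map g.toLinearMap = lagInfty n)
    (h0 : (matGraph n 0).map g.toLinearMap = matGraph n 0) (B : Matrix (Fin n) (Fin n) ℝ) :
    ∃ M : Matrix (Fin n) (Fin n) ℝ,
      Submodule.map g.toLinearMap '' circleModel n B = circleModel n M := by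
  obtain ⟨P, Q, hPQ, hgPQ⟩ := exists_eq_mulVec_of_map_lagInfty_of_map_matGraph_zero hg hinf h0
  refine ⟨Q * B * Qᵀ, ?_⟩
  simp only [circleModel, Set.image_union, Set.image_singleton, hinf, ← Set.range_comp,
    Function.comp_def, map_matGraph_of_eq_mulVec hPQ hgPQ, Matrix.mul_smul, Matrix.smul_mul]

theorem eq_circleModel_of_isCircle {S : Set (Submodule ℝ (SympV n))} (hS : IsCircle n S)
    (hinf : lagInfty n ∈ S) (h0 : matGraph n 0 ∈ S) {B : Matrix (Fin n) (Fin n) ℝ}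
    (hB : IsUnit B.det) (h : matGraph n B ∈ S) : S = circleModel n B := by
  obtain ⟨g, hg, B', hB's, hB', rfl⟩ := isCircle_iff.1 hS
  obtain ⟨g', hg', hS', hinf', h0'⟩ :=
    exists_isSymplectic_fix_lagInfty_matGraph_zero hB's hB' hg hinf h0
  obtain ⟨M, hM⟩ := exists_image_circleModel_eq hg' hinf' h0' B'
  rw [← hS', hM] at h ⊢
  exact circleModel_eq_of_matGraph_mem hB h

theorem eq_image_circleModel_of_isCircle {G : SympV n ≃ₗ[ℝ] SympV n} (hG : IsSymplectic n G)
    {S : Set (Submodule ℝ (SympV n))} (hS : IsCircle n S) {B : Matrix (Fin n) (Fin n) ℝ}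
    (hB : IsUnit B.det) (hinf : (lagInfty n).map G.toLinearMap ∈ S)
    (h0 : (matGraph n 0).map G.toLinearMap ∈ S) (h : (matGraph n B).map G.toLinearMap ∈ S) :
    S = Submodule.map G.toLinearMap '' circleModel n B := by
  have mem_image_symm : ∀ L, L.map G.toLinearMap ∈ S → L ∈ Submodule.map G.symm.toLinearMap '' S :=
    fun L hL => ⟨_, hL, Submodule.map_symm_map_equiv G L⟩
  rw [← eq_circleModel_of_isCircle (hS.image hG.symm) (mem_image_symm _ hinf)
    (mem_image_symm _ h0) hB (mem_image_symm _ h), Submodule.image_map_image_map_symm]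

end

theorem stmt16 (n : ℕ) (L1 L2 L3 : Submodule ℝ (SympV n))
    (hL1 : IsLagrangian n L1) (hL2 : IsLagrangian n L2) (hL3 : IsLagrangian n L3)
    (h12 : IsCompl L1 L2) (h13 : IsCompl L1 L3) (h23 : IsCompl L2 L3) :
    -- (a) existence of a circle through `L1, L2, L3`
    (∃ S : Set (Submodule ℝ (SympV n)), IsCircle n S ∧ L1 ∈ S ∧ L2 ∈ S ∧ L3 ∈ S) ∧
    -- (b) uniqueness
    (∀ S S' : Set (Submodule ℝ (SympV n)), IsCircle n S → IsCircle n S' →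
      L1 ∈ S → L2 ∈ S → L3 ∈ S → L1 ∈ S' → L2 ∈ S' → L3 ∈ S' → S = S') := by
  obtain ⟨G, hG, rfl, rfl⟩ := exists_isSymplectic_map_lagInfty_map_matGraph_zero hL2 hL3 h23
  obtain ⟨B, hBs, hB, rfl⟩ := exists_isSymm_isUnit_eq_map_matGraph hG hL1 h12 h13
  refine ⟨⟨_, isCircle_iff.2 ⟨G, hG, B, hBs, hB, rfl⟩,
    Set.mem_image_of_mem _ (matGraph_mem_circleModel B),
    Set.mem_image_of_mem _ (lagInfty_mem_circleModel B),
    Set.mem_image_of_mem _ (matGraph_zero_mem_circleModel B)⟩, ?_⟩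
  intro S S' hS hS' h1 h2 h3 h1' h2' h3'
  rw [eq_image_circleModel_of_isCircle hG hS hB h2 h3 h1,
    eq_image_circleModel_of_isCircle hG hS' hB h2' h3' h1']
end
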